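/- arXiv:1303.4133 — 3 statements merged into one kernel-verified Lean document; each statement's English description precedes it below -/
import Mathlib

section
/- Let (N, M) be a factorizable pair of triangulated subcategories of a triangulated category T, and let Q : T → T/(N ∩ M) be the Verdier quotient functor by the triangulated subcategory N ∩ M. Then for any objects x in N and y in M, every morphism Q(x) → Q(y) in T/(N ∩ M) is the zero morphism. -/
open CategoryTheory CategoryTheory.Limits CategoryTheory.Pretriangulated

universe w v u v₂ u₂ v₃ u₃ v₄ u₄ v₅ u₅ v₆ u₆

structure IsTriangulatedSub {C : Type u} [Category.{v} C] [HasZeroObject C] [HasShift C ℤ]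
    [Preadditive C] [∀ n : ℤ, (shiftFunctor C n).Additive] [Pretriangulated C]
    (P : C → Prop) : Prop where
  iso_closed : ∀ ⦃x y : C⦄, (x ≅ y) → P x → P y
  zero : ∀ x : C, IsZero x → P x
  shift : ∀ (x : C) (n : ℤ), P x → P (x⟦n⟧)
  two_of_three₁₂ : ∀ T ∈ distTriang C, P T.obj₁ → P T.obj₂ → P T.obj₃
  two_of_three₂₃ : ∀ T ∈ distTriang C, P T.obj₂ → P T.obj₃ → P T.obj₁
  two_of_three₁₃ : ∀ T ∈ distTriang C, P T.obj₁ → P T.obj₃ → P T.obj₂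

def IsSummandClosed {C : Type u} [Category.{v} C] [Preadditive C]
    [HasBinaryBiproducts C] (P : C → Prop) : Prop :=
  ∀ x y : C, P (x ⊞ y) → P x ∧ P y

def coneIn {C : Type u} [Category.{v} C] [HasZeroObject C] [HasShift C ℤ]
    [Preadditive C] [∀ n : ℤ, (shiftFunctor C n).Additive] [Pretriangulated C]
    (P : C → Prop) : MorphismProperty C :=
  fun X Y f => ∃ (Z : C) (g : Y ⟶ Z) (h : Z ⟶ X⟦(1 : ℤ)⟧),
    (Triangle.mk f g h ∈ distTriang C) ∧ P Z


/-- The ordered pair of subcategories `(P, P')` is *factorizable* if every morphism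
from an object of `P` to an object of `P'` factors through an object of `P ∩ P'`. -/
def Factorizable {C : Type u} [Category.{v} C] (P P' : C → Prop) : Prop :=
  ∀ (x y : C) (f : x ⟶ y), P x → P' y →
    ∃ (z : C) (a : x ⟶ z) (b : z ⟶ y), (P z ∧ P' z) ∧ a ≫ b = f

/-!
Write a morphism `Q x ⟶ Q y` of the Verdier quotient as a left fraction `Q f ≫ (Q s)⁻¹`
with `f : x ⟶ y'` and `s : y ⟶ y'` a morphism with cone in `N ∩ M`. Since `y` and the cone lie
in `M`, so does `y'`; by factorizability `f` factors through an object of `N ∩ M`, which becomes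
zero in the quotient, so `Q f = 0`.
-/

open ZeroObject

section

variable {C : Type u} [Category.{v} C] [HasZeroObject C] [HasShift C ℤ] [Preadditive C]
  [∀ n : ℤ, (shiftFunctor C n).Additive] [Pretriangulated C]

lemma coneIn_eq_trW (P : C → Prop) : coneIn P = ObjectProperty.trW P := by
  ext X Y f
  exact ⟨fun ⟨Z, g, h, hT, hZ⟩ => ⟨Z, g, h, hT, hZ⟩, fun ⟨Z, g, h, hT, hZ⟩ => ⟨Z, g, h, hT, hZ⟩⟩

namespace IsTriangulatedSub

variable {P : C → Prop}

lemma isClosedUnderIsomorphisms (hP : IsTriangulatedSub P) :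
    ObjectProperty.IsClosedUnderIsomorphisms P :=
  ⟨fun e hX => hP.iso_closed e hX⟩

lemma isTriangulated (hP : IsTriangulatedSub P) : ObjectProperty.IsTriangulated P :=
  have := hP.isClosedUnderIsomorphisms
  { exists_zero := ⟨0, isZero_zero C, hP.zero 0 (isZero_zero C)⟩
    isStableUnderShiftBy := fun n => ⟨fun X hX => hP.shift X n hX⟩
    toIsTriangulatedClosed₂ := .mk' hP.two_of_three₁₃ }

lemma prop_of_trW (hP : IsTriangulatedSub P) {W : ObjectProperty C} (hWP : W ≤ P)
    {Y Y' : C} {s : Y ⟶ Y'} (hs : W.trW s) (hY : P Y) : P Y' := by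
  obtain ⟨Z, g, h, hT, hZ⟩ := hs
  exact hP.two_of_three₁₃ _ hT hY (hWP _ hZ)

end IsTriangulatedSub

lemma ObjectProperty.isZero_obj_of_trW_isInvertedBy {D : Type u₂} [Category.{v₂} D]
    [HasZeroMorphisms D] {P : ObjectProperty C} {L : C ⥤ D} [L.PreservesZeroMorphisms]
    (hL : P.trW.IsInvertedBy L) {Z : C} (hZ : P Z) : IsZero (L.obj Z) :=
  have : IsIso (L.map (0 : 0 ⟶ Z)) := hL _ (ObjectProperty.trW.mk P (contractible_distinguished₁ Z) hZ)
  (L.map_isZero (isZero_zero C)).of_iso (asIso (L.map (0 : 0 ⟶ Z))).symm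

end

/-- If `(N, M)` is a factorizable pair of triangulated subcategories
of a triangulated category `C` and `Q : C ⥤ D` is the Verdier quotient of `C` by the
triangulated subcategory `N ∩ M`, then every morphism `Q(x) ⟶ Q(y)` with `x` in `N`
and `y` in `M` is zero. -/
theorem quotient_of_factorizable_pair_hom_zero
    {C : Type u} [Category.{v} C] [HasZeroObject C] [HasShift C ℤ] [Preadditive C]
    [∀ n : ℤ, (shiftFunctor C n).Additive] [Pretriangulated C] [IsTriangulated C]
    {D : Type u₂} [Category.{v₂} D] [HasZeroObject D] [HasShift D ℤ] [Preadditive D]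
    [∀ n : ℤ, (shiftFunctor D n).Additive] [Pretriangulated D] [IsTriangulated D]
    (N M : C → Prop) (hN : IsTriangulatedSub N) (hM : IsTriangulatedSub M)
    (hfac : Factorizable N M)
    (Q : C ⥤ D) [Q.CommShift ℤ] [Q.IsTriangulated]
    [Q.IsLocalization (coneIn (fun z => N z ∧ M z))] :
    ∀ (x y : C), N x → M y → ∀ f : Q.obj x ⟶ Q.obj y, f = 0 := by
  intro x y hx hy f
  let W : ObjectProperty C := (N : ObjectProperty C) ⊓ M
  have := hN.isTriangulated
  have := hM.isTriangulated
  have := hM.isClosedUnderIsomorphisms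
  have : Q.IsLocalization W.trW := coneIn_eq_trW (fun z => N z ∧ M z) ▸ inferInstance
  obtain ⟨φ, rfl⟩ := Localization.exists_leftFraction Q W.trW f
  have hY' : M φ.Y' := hM.prop_of_trW (fun _ h => h.2) φ.hs hy
  obtain ⟨z, a, b, hz, hab⟩ := hfac x φ.Y' φ.f hx hY'
  have hQz : IsZero (Q.obj z) :=
    ObjectProperty.isZero_obj_of_trW_isInvertedBy (Localization.inverts Q W.trW) hz
  rw [MorphismProperty.LeftFraction.map_eq, ← hab, Q.map_comp, hQz.eq_of_src (Q.map b) 0,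
    comp_zero, zero_comp]
end

section
/- Let M and N be triangulated subcategories of a triangulated category T such that every morphism of T from an object of M to an object of N is the zero morphism. Then the composition of the inclusion M ↪ T with the Verdier quotient functor Q : T → T/N is fully faithful. -/
open CategoryTheory CategoryTheory.Limits CategoryTheory.Pretriangulated

universe w v u v₂ u₂ v₃ u₃ v₄ u₄ v₅ u₅ v₆ u₆

/-!
Every object `x` of `M` lies in the left orthogonal of `N`. For such an `x`, the long exact
`Hom(x, -)` sequence of a triangle `y ⟶ z ⟶ n ⟶ y⟦1⟧` with `n ∈ N` shows that composition
with `y ⟶ z` is bijective on morphisms out of `x`. Since the Verdier quotient `C/N` is computed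
by left fractions whose denominators are such morphisms, `Hom(x, y) → Hom(Q x, Q y)` is
bijective for every `y`.
-/

namespace IsTriangulatedSub

variable {C : Type u} [Category.{v} C] [HasZeroObject C] [HasShift C ℤ] [Preadditive C]
  [∀ n : ℤ, (shiftFunctor C n).Additive] [Pretriangulated C]

open ZeroObject in
theorem isTriangulated_s8 {N : C → Prop} (hN : IsTriangulatedSub N) :
    ObjectProperty.IsTriangulated N where
  exists_zero := ⟨0, isZero_zero C, hN.zero 0 (isZero_zero C)⟩
  isStableUnderShiftBy n := ⟨fun X hX => hN.shift X n hX⟩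
  ext₂' T hT h₁ h₃ := ObjectProperty.le_isoClosure _ _ (hN.two_of_three₁₃ T hT h₁ h₃)

end IsTriangulatedSub

theorem coneIn_eq_trW_s8 {C : Type u} [Category.{v} C] [HasZeroObject C] [HasShift C ℤ]
    [Preadditive C] [∀ n : ℤ, (shiftFunctor C n).Additive] [Pretriangulated C]
    (N : C → Prop) : coneIn N = ObjectProperty.trW N := by
  ext X Y f
  simp only [coneIn, ObjectProperty.trW_iff, exists_prop]

/-- Let `M` and `N` be triangulated subcategories of a triangulated
category `C` such that every morphism from an object of `M` to an object of `N` is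
zero, and let `Q : C ⥤ D` be the Verdier quotient of `C` by `N`. Then the composition
of the inclusion `M ↪ C` with `Q` is fully faithful, i.e. for all `x`, `y` in `M`,
the map `(x ⟶ y) → (Q(x) ⟶ Q(y))` is bijective. -/
theorem quotient_restricted_fully_faithful
    {C : Type u} [Category.{v} C] [HasZeroObject C] [HasShift C ℤ] [Preadditive C]
    [∀ n : ℤ, (shiftFunctor C n).Additive] [Pretriangulated C] [IsTriangulated C]
    {D : Type u₂} [Category.{v₂} D] [HasZeroObject D] [HasShift D ℤ] [Preadditive D]
    [∀ n : ℤ, (shiftFunctor D n).Additive] [Pretriangulated D] [IsTriangulated D]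
    (M N : C → Prop) (hM : IsTriangulatedSub M) (hN : IsTriangulatedSub N)
    (hzero : ∀ (x y : C) (f : x ⟶ y), M x → N y → f = 0)
    (Q : C ⥤ D) [Q.CommShift ℤ] [Q.IsTriangulated] [Q.IsLocalization (coneIn N)] :
    ∀ x y : C, M x → M y → Function.Bijective (fun f : x ⟶ y => Q.map f) := by
  intro x y hx _
  have := hN.isTriangulated_s8
  have : Q.IsLocalization (ObjectProperty.trW N) := coneIn_eq_trW_s8 N ▸ inferInstance
  have hx_orth : ObjectProperty.leftOrthogonal N x := fun y f hy => hzero x y f hx hy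
  exact ObjectProperty.leftOrthogonal.map_bijective_of_isTriangulated hx_orth Q y
end

section
/- Let M and N be triangulated subcategories of a triangulated category T such that every morphism of T from an object of M to an object of N is the zero morphism, and let Q : T → T/N be the Verdier quotient functor. Then the isomorphism closure in T/N of the full image Q(M) (i.e. the full subcategory of T/N of objects isomorphic to Q(m) for some object m of M) is a triangulated subcategory of T/N. -/
open CategoryTheory CategoryTheory.Limits CategoryTheory.Pretriangulated

universe w v u v₂ u₂ v₃ u₃ v₄ u₄ v₅ u₅ v₆ u₆

/-!
Objects of `M` are left orthogonal to `N`, so `Q` is bijective on morphisms out of them: a right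
fraction `s⁻¹ ≫ f` from `m` has `cone s ∈ N`, hence `m ⟶ cone s` vanishes and `s` splits.
Thus `Q` restricted to the full subcategory `M` is a full triangulated functor, and the essential
image of a full triangulated functor is a triangulated subcategory.
-/

section

open ZeroObject

variable {C : Type u} [Category.{v} C] [HasZeroObject C] [HasShift C ℤ] [Preadditive C]
  [∀ n : ℤ, (shiftFunctor C n).Additive] [Pretriangulated C]

namespace IsTriangulatedSub

lemma isTriangulated_s9 {P : ObjectProperty C} (hP : IsTriangulatedSub P) : P.IsTriangulated where
  exists_zero := ⟨0, isZero_zero C, hP.zero 0 (isZero_zero C)⟩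
  isStableUnderShiftBy n := ⟨fun X hX => hP.shift X n hX⟩
  ext₂' T hT h₁ h₃ := P.le_isoClosure _ (hP.two_of_three₁₃ T hT h₁ h₃)

lemma of_isTriangulated (P : ObjectProperty C) [P.IsTriangulated]
    [P.IsClosedUnderIsomorphisms] : IsTriangulatedSub P where
  iso_closed _ _ e hX := P.prop_of_iso e hX
  zero _ hX := P.prop_of_isZero hX
  shift X n hX := P.le_shift n X hX
  two_of_three₁₂ := P.ext_of_isTriangulatedClosed₃
  two_of_three₂₃ := P.ext_of_isTriangulatedClosed₁
  two_of_three₁₃ := P.ext_of_isTriangulatedClosed₂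

end IsTriangulatedSub

lemma trW_eq_coneIn (P : ObjectProperty C) : P.trW = coneIn P := by
  ext X Y f
  simp only [ObjectProperty.trW, coneIn, exists_prop]

lemma full_ι_comp_of_le_leftOrthogonal [IsTriangulated C] {M N : ObjectProperty C}
    [N.IsTriangulated] (hMN : M ≤ N.leftOrthogonal) {D : Type u₂} [Category.{v₂} D]
    (L : C ⥤ D) [L.IsLocalization N.trW] : (M.ι ⋙ L).Full where
  map_surjective {X Y} f := by
    obtain ⟨φ, hφ⟩ :=
      (ObjectProperty.leftOrthogonal.map_bijective_of_isTriangulated (hMN _ X.2) L Y.obj).2 f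
    exact ⟨M.homMk φ, hφ⟩

lemma isTriangulatedSub_map (P : ObjectProperty C) [P.IsTriangulated]
    {D : Type u₂} [Category.{v₂} D] [HasZeroObject D] [HasShift D ℤ] [Preadditive D]
    [∀ n : ℤ, (shiftFunctor D n).Additive] [Pretriangulated D]
    (F : C ⥤ D) [F.CommShift ℤ] [F.IsTriangulated] [(P.ι ⋙ F).Full] :
    IsTriangulatedSub (P.map F) := by
  rw [← F.essImage_ι_comp]
  exact .of_isTriangulated _

end

/-- Let `M` and `N` be triangulated subcategories of a triangulated
category `C` such that every morphism from an object of `M` to an object of `N` is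
zero, and let `Q : C ⥤ D` be the Verdier quotient of `C` by `N`. Then the isomorphism
closure in `D` of the full image `Q(M)` is a triangulated subcategory of `D`. -/
theorem isoClosure_image_is_triangulated_subcategory
    {C : Type u} [Category.{v} C] [HasZeroObject C] [HasShift C ℤ] [Preadditive C]
    [∀ n : ℤ, (shiftFunctor C n).Additive] [Pretriangulated C] [IsTriangulated C]
    {D : Type u₂} [Category.{v₂} D] [HasZeroObject D] [HasShift D ℤ] [Preadditive D]
    [∀ n : ℤ, (shiftFunctor D n).Additive] [Pretriangulated D] [IsTriangulated D]
    (M N : C → Prop) (hM : IsTriangulatedSub M) (hN : IsTriangulatedSub N)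
    (hzero : ∀ (x y : C) (f : x ⟶ y), M x → N y → f = 0)
    (Q : C ⥤ D) [Q.CommShift ℤ] [Q.IsTriangulated] [Q.IsLocalization (coneIn N)] :
    IsTriangulatedSub (fun y : D => ∃ x : C, M x ∧ Nonempty (y ≅ Q.obj x)) := by
  have := hM.isTriangulated_s9
  have := hN.isTriangulated_s9
  have : Q.IsLocalization (ObjectProperty.trW N) := by rwa [trW_eq_coneIn]
  have := full_ι_comp_of_le_leftOrthogonal (M := M)
    (fun x hx y f hy => hzero x y f hx hy) Q
  convert isTriangulatedSub_map M Q using 1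
  ext y
  simp only [ObjectProperty.prop_map_iff, Iso.nonempty_iso_symm]
end
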